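/- Let W be the Weyl group of a root datum Ψ with a finite automorphism group Γ stabilizing a base Δ, and let w ∈ W^Γ be nontrivial. Then there is a positive root β (with respect to Δ) such that w(γ·β) is negative for every γ ∈ Γ; consequently i*(w(i*β)) in the restricted lattice cannot equal i*β, where all coefficients of ι(w(i*β)) in terms of Δ are nonpositive. -/

import Mathlib

open scoped BigOperators Classical

/-- The multiplicative group structure on `AddAut M` (composition), as in the older Mathlib. -/
instance AddAut.instGroupComp {M : Type*} [Add M] : Group (AddAut M) where
  mul g h := AddEquiv.trans h g
  one := AddEquiv.refl _
  inv := AddEquiv.symm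
  mul_assoc _ _ _ := rfl
  one_mul _ := rfl
  mul_one _ := rfl
  inv_mul_cancel := AddEquiv.self_trans_symm

/-- A (not necessarily reduced) root datum `Ψ = (X*, Φ, X_*, Φ^∨)`:
dual lattices `X`, `Y` in perfect duality, a finite set of roots, and a
coroot map satisfying the usual axioms. -/
structure ZRootDatum (X Y : Type) [AddCommGroup X] [AddCommGroup Y] : Type where
  pair : X →+ Y →+ ℤ
  perfect : Function.Bijective fun x : X => pair x
  perfect' : Function.Bijective fun y : Y => pair.flip y
  roots : Finset X
  coroot : X → Y
  pair_self : ∀ β ∈ roots, pair β (coroot β) = 2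
  reflect_mem : ∀ β ∈ roots, ∀ x ∈ roots, x - pair x (coroot β) • β ∈ roots
  coreflect_mem : ∀ β ∈ roots, ∀ β' ∈ roots,
    ∃ β'' ∈ roots, coroot β' - pair β (coroot β') • coroot β = coroot β''

variable {X Y Γ : Type} [AddCommGroup X] [AddCommGroup Y] [Group Γ]

/-- The Weyl group of a root datum: the subgroup of `Aut(X)` generated by the
reflections `w_β : x ↦ x - ⟨x, β^∨⟩β` through the roots. -/
def ZRootDatum.weylGroup (Ψ : ZRootDatum X Y) : Subgroup (AddAut X) :=
  Subgroup.closure {w : AddAut X | ∃ β ∈ Ψ.roots, ∀ x, w x = x - Ψ.pair x (Ψ.coroot β) • β}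

/-- `Δ` is a base (system of simple roots) of the root datum. -/
def ZRootDatum.IsBase (Ψ : ZRootDatum X Y) (Δ : Finset X) : Prop :=
  (↑Δ : Set X) ⊆ ↑Ψ.roots ∧
  LinearIndependent ℤ (fun a : ↥(↑Δ : Set X) => (a : X)) ∧
  ∀ β ∈ Ψ.roots, ∃ c : X → ℤ,
    β = ∑ a ∈ Δ, c a • a ∧ ((∀ a ∈ Δ, 0 ≤ c a) ∨ (∀ a ∈ Δ, c a ≤ 0))

/-- A group `Γ` acting (via `ρ` on `X*` and `ρ'` on `X_*`) by automorphisms of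
the root datum `Ψ`. -/
structure RDAction (Ψ : ZRootDatum X Y) (ρ : Γ →* AddAut X) (ρ' : Γ →* AddAut Y) : Prop where
  pair_eq : ∀ γ x y, Ψ.pair (ρ γ x) (ρ' γ y) = Ψ.pair x y
  root_mem : ∀ γ, ∀ β ∈ Ψ.roots, ρ γ β ∈ Ψ.roots
  coroot_eq : ∀ γ, ∀ β ∈ Ψ.roots, Ψ.coroot (ρ γ β) = ρ' γ (Ψ.coroot β)

/-- The norm map `N : x ↦ ∑_{γ ∈ Γ} γ·x`.  For a free lattice `X`, its kernel
is exactly the kernel of the projection of `X` onto the coinvariants `X_Γ`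
modulo torsion. -/
noncomputable def normMap [Fintype Γ] (ρ : Γ →* AddAut X) : X →+ X :=
  ∑ γ : Γ, ((ρ γ : X ≃+ X) : X →+ X)

/-- The projection `i* : X* → X̄*` onto the coinvariant lattice modulo torsion. -/
noncomputable def istar [Fintype Γ] (ρ : Γ →* AddAut X) : X →+ X ⧸ (normMap ρ).ker :=
  QuotientAddGroup.mk' (normMap ρ).ker

/-!
A Weyl group element sending no positive root to a negative one is trivial. On the root lattice it
is a word in simple reflections, and the exchange condition shortens such a word until it is empty;
so it fixes every root. An element of `W` fixing every root is the identity, because no nonzero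
element of the coroot lattice is orthogonal to all roots: compare it with the `W`-invariant form
`B = ∑_c ⟨·, c⟩⟨·, c⟩`, `c` running over the coroots.

For `w ∈ W^Γ` this gives a positive root `β` with `wβ` negative, and `w(γβ) = γ(wβ)` is negative
for every `γ` since `Γ` permutes `Δ`. If `i*(wβ) = i*β`, the norm `∑_γ γβ` would be both a
nonnegative and a nonpositive combination of `Δ`, hence zero, which forces `β = 0`.
-/

def nonnegCone (Δ : Finset X) : AddSubmonoid X where
  carrier := {x | ∃ c : X → ℤ, x = ∑ a ∈ Δ, c a • a ∧ ∀ a ∈ Δ, 0 ≤ c a}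
  zero_mem' := ⟨0, by simp, fun _ _ => le_rfl⟩
  add_mem' := by
    rintro _ _ ⟨c, rfl, hc⟩ ⟨d, rfl, hd⟩
    exact ⟨c + d, by simp [add_smul, Finset.sum_add_distrib],
      fun a ha => add_nonneg (hc a ha) (hd a ha)⟩

section NonnegCone

variable {Δ : Finset X} {x : X}

lemma mem_nonnegCone_of_mem {a : X} (ha : a ∈ Δ) : a ∈ nonnegCone Δ :=
  ⟨fun b => if b = a then 1 else 0, by simp [ite_smul, ha],
    fun b _ => by dsimp only; split_ifs <;> norm_num⟩

lemma zsmul_mem_nonnegCone {k : ℤ} (hk : 0 ≤ k) (hx : x ∈ nonnegCone Δ) : k • x ∈ nonnegCone Δ := by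
  lift k to ℕ using hk
  simpa using nsmul_mem hx k

lemma map_mem_nonnegCone (f : X →+ X) (hf : ∀ a ∈ Δ, f a ∈ Δ) (hx : x ∈ nonnegCone Δ) :
    f x ∈ nonnegCone Δ := by
  obtain ⟨c, rfl, hc⟩ := hx
  rw [map_sum]
  exact sum_mem fun a ha => by
    rw [map_zsmul]
    exact zsmul_mem_nonnegCone (hc a ha) (mem_nonnegCone_of_mem (hf a ha))

lemma exists_nonpos_coeffs_of_neg_mem_nonnegCone (hx : -x ∈ nonnegCone Δ) :
    ∃ c : X → ℤ, x = ∑ a ∈ Δ, c a • a ∧ ∀ a ∈ Δ, c a ≤ 0 := by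
  obtain ⟨c, hc, hc0⟩ := hx
  exact ⟨-c, by simp [neg_smul, ← hc], fun a ha => by simpa using hc0 a ha⟩

lemma coeff_eq_of_sum_smul_eq (hΔ : LinearIndepOn ℤ id (Δ : Set X)) {c d : X → ℤ}
    (h : ∑ a ∈ Δ, c a • a = ∑ a ∈ Δ, d a • a) {a : X} (ha : a ∈ Δ) : c a = d a :=
  linearIndepOn_finset_iffₛ.1 hΔ c d h a ha

lemma coeff_nonneg_of_mem_nonnegCone (hΔ : LinearIndepOn ℤ id (Δ : Set X))
    (hx : x ∈ nonnegCone Δ) {c : X → ℤ} (hc : x = ∑ a ∈ Δ, c a • a) {a : X} (ha : a ∈ Δ) :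
    0 ≤ c a := by
  obtain ⟨d, hd, hd0⟩ := hx
  rw [coeff_eq_of_sum_smul_eq hΔ (hc.symm.trans hd) ha]
  exact hd0 a ha

lemma eq_zero_of_mem_nonnegCone_of_neg_mem (hΔ : LinearIndepOn ℤ id (Δ : Set X))
    (hx : x ∈ nonnegCone Δ) (hx' : -x ∈ nonnegCone Δ) : x = 0 := by
  obtain ⟨c, rfl, hc⟩ := hx
  have hc' : ∀ a ∈ Δ, 0 ≤ -c a := fun a ha =>
    coeff_nonneg_of_mem_nonnegCone hΔ hx' (c := -c) (by simp [neg_smul]) ha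
  exact Finset.sum_eq_zero fun a ha => by
    rw [le_antisymm (neg_nonneg.1 (hc' a ha)) (hc a ha), zero_smul]

end NonnegCone

namespace ZRootDatum

open Set

lemma isTorsionFree (Ψ : ZRootDatum X Y) : Module.IsTorsionFree ℤ X :=
  Function.Injective.moduleIsTorsionFree (fun x => ⇑(Ψ.pair x))
    (DFunLike.coe_injective.comp Ψ.perfect.injective) fun k x => by ext; simp

section

variable (Ψ : ZRootDatum X Y)

lemma ne_zero_of_mem_roots {β : X} (hβ : β ∈ Ψ.roots) : β ≠ 0 := by
  rintro rfl
  simpa using Ψ.pair_self 0 hβ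

lemma neg_mem_roots {β : X} (hβ : β ∈ Ψ.roots) : -β ∈ Ψ.roots := by
  simpa [Ψ.pair_self β hβ, two_smul] using Ψ.reflect_mem β hβ β hβ

def corootForm (β : X) : Module.Dual ℤ X := (Ψ.pair.flip (Ψ.coroot β)).toIntLinearMap

@[simp] lemma corootForm_apply (β x : X) : Ψ.corootForm β x = Ψ.pair x (Ψ.coroot β) := rfl

lemma corootForm_self {β : X} (hβ : β ∈ Ψ.roots) : Ψ.corootForm β β = 2 := Ψ.pair_self β hβ

/-- Off the roots this is the identity, so that every list of elements of `X` is a Weyl word. -/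
noncomputable def reflection (β : X) : X ≃ₗ[ℤ] X :=
  if hβ : β ∈ Ψ.roots then Module.reflection (Ψ.corootForm_self hβ) else LinearEquiv.refl ℤ X

lemma reflection_apply {β : X} (hβ : β ∈ Ψ.roots) (x : X) :
    Ψ.reflection β x = x - Ψ.pair x (Ψ.coroot β) • β := by
  rw [reflection, dif_pos hβ, Module.reflection_apply, corootForm_apply]

lemma reflection_self {β : X} (hβ : β ∈ Ψ.roots) : Ψ.reflection β β = -β := by
  rw [reflection, dif_pos hβ, Module.reflection_apply_self]

lemma reflection_reflection (β x : X) : Ψ.reflection β (Ψ.reflection β x) = x := by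
  by_cases hβ : β ∈ Ψ.roots
  · rw [reflection, dif_pos hβ]
    exact Module.involutive_reflection _ x
  · rw [reflection, dif_neg hβ]
    rfl

lemma reflection_inv (β : X) : (Ψ.reflection β)⁻¹ = Ψ.reflection β :=
  inv_eq_of_mul_eq_one_right <| LinearEquiv.ext (Ψ.reflection_reflection β)

@[simp] lemma reflection_symm_apply (β x : X) : (Ψ.reflection β).symm x = Ψ.reflection β x :=
  (Ψ.reflection β).injective (by rw [LinearEquiv.apply_symm_apply, reflection_reflection])

lemma reflection_mem_roots {β x : X} (hx : x ∈ Ψ.roots) : Ψ.reflection β x ∈ Ψ.roots := by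
  by_cases hβ : β ∈ Ψ.roots
  · rw [reflection_apply Ψ hβ]
    exact Ψ.reflect_mem β hβ x hx
  · rwa [reflection, dif_neg hβ]

lemma reflection_mem_roots_iff (β x : X) : Ψ.reflection β x ∈ Ψ.roots ↔ x ∈ Ψ.roots :=
  ⟨fun h => Ψ.reflection_reflection β x ▸ Ψ.reflection_mem_roots h, Ψ.reflection_mem_roots⟩

def rootSpan : Submodule ℤ X := Submodule.span ℤ Ψ.roots

lemma reflection_mapsTo_rootSpan (β : X) :
    MapsTo (Ψ.reflection β) Ψ.rootSpan Ψ.rootSpan := by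
  intro x hx
  by_cases hβ : β ∈ Ψ.roots
  · rw [reflection_apply Ψ hβ]
    exact sub_mem hx (Submodule.smul_mem _ _ (Submodule.subset_span hβ))
  · rwa [reflection, dif_neg hβ]

noncomputable def wordProd (L : List X) : X ≃ₗ[ℤ] X := (L.map Ψ.reflection).prod

@[simp] lemma wordProd_nil : Ψ.wordProd [] = 1 := rfl

@[simp] lemma wordProd_cons (β : X) (L : List X) :
    Ψ.wordProd (β :: L) = Ψ.reflection β * Ψ.wordProd L := by
  simp [wordProd]

@[simp] lemma wordProd_append (L₁ L₂ : List X) :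
    Ψ.wordProd (L₁ ++ L₂) = Ψ.wordProd L₁ * Ψ.wordProd L₂ := by
  simp [wordProd]

lemma wordProd_singleton (β : X) : Ψ.wordProd [β] = Ψ.reflection β := by
  simp

lemma wordProd_reverse (L : List X) : Ψ.wordProd L.reverse = (Ψ.wordProd L)⁻¹ := by
  simp [wordProd, List.prod_inv_reverse, Function.comp_def, reflection_inv, List.map_reverse]

lemma wordProd_mem_roots_iff (L : List X) (x : X) : Ψ.wordProd L x ∈ Ψ.roots ↔ x ∈ Ψ.roots := by
  induction L with
  | nil => rfl
  | cons β L ih => rw [wordProd_cons, LinearEquiv.mul_apply, reflection_mem_roots_iff, ih]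

lemma wordProd_mapsTo_rootSpan (L : List X) :
    MapsTo (Ψ.wordProd L) Ψ.rootSpan Ψ.rootSpan := by
  induction L with
  | nil => exact mapsTo_id _
  | cons β L ih => rw [wordProd_cons]; exact (Ψ.reflection_mapsTo_rootSpan β).comp ih

lemma exists_wordProd_of_mem_weylGroup {w : AddAut X} (hw : w ∈ Ψ.weylGroup) :
    ∃ L : List X, (∀ b ∈ L, b ∈ Ψ.roots) ∧ ∀ x, w x = Ψ.wordProd L x := by
  induction hw using Subgroup.closure_induction with
  | mem g hg =>
    obtain ⟨β, hβ, hg⟩ := hg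
    exact ⟨[β], by simpa using hβ, fun x => by rw [hg, wordProd_singleton, reflection_apply Ψ hβ]⟩
  | one => exact ⟨[], by simp, fun x => rfl⟩
  | mul u v _ _ hu hv =>
    obtain ⟨Lu, hLu, hu⟩ := hu
    obtain ⟨Lv, hLv, hv⟩ := hv
    refine ⟨Lu ++ Lv, by simpa using fun b hb => hb.elim (hLu b) (hLv b), fun x => ?_⟩
    rw [wordProd_append, LinearEquiv.mul_apply, ← hv, ← hu]
    rfl
  | inv u _ hu =>
    obtain ⟨L, hL, hu⟩ := hu
    refine ⟨L.reverse, by simpa using hL, fun x => ?_⟩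
    rw [wordProd_reverse, ← (Ψ.wordProd L).injective.eq_iff, ← LinearEquiv.mul_apply,
      mul_inv_cancel, ← hu]
    exact u.apply_symm_apply x

/-- The axioms do not say that `s_α` carries `β^∨` to `(s_α β)^∨`; this uniqueness of reflections
preserving the finite set of roots stands in for it. -/
lemma reflection_eqOn_preReflection {β : X} (hβ : β ∈ Ψ.roots) {g : Module.Dual ℤ X}
    (hg : g β = 2) (hmaps : MapsTo (Module.preReflection β g) Ψ.roots Ψ.roots) :
    EqOn (Ψ.reflection β) (Module.preReflection β g) Ψ.rootSpan := by
  have := Ψ.isTorsionFree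
  have hf : MapsTo (Module.preReflection β (Ψ.corootForm β)) Ψ.roots Ψ.roots := fun x hx => by
    simpa [Module.preReflection_apply, ← reflection_apply Ψ hβ] using Ψ.reflection_mem_roots hx
  have hfg := Module.Dual.eq_of_preReflection_mapsTo' Ψ.roots.finite_toSet
    (Submodule.subset_span hβ) (Ψ.corootForm_self hβ) hf hg hmaps
  intro x hx
  have hx' : Ψ.corootForm β x = g x := DFunLike.congr_fun hfg ⟨x, hx⟩
  rw [Module.preReflection_apply, ← hx', corootForm_apply, reflection_apply Ψ hβ]

lemma reflection_eqOn_of_eq_zsmul {β β' : X} (hβ : β ∈ Ψ.roots) (hβ' : β' ∈ Ψ.roots) {q : ℤ}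
    (hq : β' = q • β) : EqOn (Ψ.reflection β') (Ψ.reflection β) Ψ.rootSpan := by
  have hpre : ∀ x, Module.preReflection β (q • Ψ.corootForm β') x = Ψ.reflection β' x := fun x => by
    rw [Module.preReflection_apply, reflection_apply Ψ hβ', hq, smul_smul, LinearMap.smul_apply,
      smul_eq_mul, corootForm_apply, mul_comm]
  have h2 : (q • Ψ.corootForm β') β = 2 := by
    have := Ψ.corootForm_self hβ'
    rwa [hq, map_zsmul, ← LinearMap.smul_apply, ← hq] at this
  intro x hx
  rw [Ψ.reflection_eqOn_preReflection hβ h2 (fun y hy => by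
    rw [hpre]; exact Ψ.reflection_mem_roots hy) hx, hpre]

lemma reflection_apply_eqOn_conj {u : X ≃ₗ[ℤ] X} (hu : ∀ x, u x ∈ Ψ.roots ↔ x ∈ Ψ.roots) {β : X}
    (hβ : β ∈ Ψ.roots) : EqOn (Ψ.reflection (u β)) (u ∘ Ψ.reflection β ∘ u.symm) Ψ.rootSpan := by
  have hpre : ∀ x, Module.preReflection (u β) ((Ψ.corootForm β).comp u.symm.toLinearMap) x =
      u (Ψ.reflection β (u.symm x)) := fun x => by
    simp [Module.preReflection_apply, reflection_apply Ψ hβ]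
  have hmaps : MapsTo (Module.preReflection (u β) ((Ψ.corootForm β).comp u.symm.toLinearMap))
      Ψ.roots Ψ.roots := fun x hx => by
    rw [hpre, Finset.mem_coe, hu]
    exact Ψ.reflection_mem_roots ((hu _).1 (by simpa using hx))
  intro x hx
  rw [Ψ.reflection_eqOn_preReflection ((hu β).2 hβ) (by simpa using Ψ.corootForm_self hβ) hmaps hx,
    hpre, Function.comp_apply, Function.comp_apply]

noncomputable def invariantForm : LinearMap.BilinForm ℤ X :=
  ∑ c ∈ Ψ.roots.image Ψ.coroot,
    (Ψ.pair.flip c).toIntLinearMap.smulRight (Ψ.pair.flip c).toIntLinearMap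

lemma invariantForm_apply (u v : X) :
    Ψ.invariantForm u v = ∑ c ∈ Ψ.roots.image Ψ.coroot, Ψ.pair u c * Ψ.pair v c := by
  simp [invariantForm, LinearMap.sum_apply]

def coreflection (β : X) (y : Y) : Y := y - Ψ.pair β y • Ψ.coroot β

lemma pair_reflection {β : X} (hβ : β ∈ Ψ.roots) (x : X) (y : Y) :
    Ψ.pair (Ψ.reflection β x) y = Ψ.pair x (Ψ.coreflection β y) := by
  simp only [reflection_apply Ψ hβ, coreflection, map_sub, map_zsmul, AddMonoidHom.sub_apply,
    AddMonoidHom.smul_apply, smul_eq_mul]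
  ring

lemma coreflection_coreflection {β : X} (hβ : β ∈ Ψ.roots) (y : Y) :
    Ψ.coreflection β (Ψ.coreflection β y) = y := by
  simp only [coreflection, map_sub, map_zsmul, smul_eq_mul, Ψ.pair_self β hβ]
  rw [sub_sub, ← add_smul, show ∀ p : ℤ, p + (p - p * 2) = 0 from fun p => by ring, zero_smul,
    sub_zero]

lemma coreflection_mem_image {β : X} (hβ : β ∈ Ψ.roots) {c : Y}
    (hc : c ∈ Ψ.roots.image Ψ.coroot) : Ψ.coreflection β c ∈ Ψ.roots.image Ψ.coroot := by
  obtain ⟨β', hβ', rfl⟩ := Finset.mem_image.1 hc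
  obtain ⟨β'', hβ'', h⟩ := Ψ.coreflect_mem β hβ β' hβ'
  exact Finset.mem_image.2 ⟨β'', hβ'', h.symm⟩

lemma invariantForm_reflection {β : X} (hβ : β ∈ Ψ.roots) (u v : X) :
    Ψ.invariantForm (Ψ.reflection β u) (Ψ.reflection β v) = Ψ.invariantForm u v := by
  simp only [invariantForm_apply, pair_reflection Ψ hβ]
  exact Finset.sum_nbij' _ _ (fun c => Ψ.coreflection_mem_image hβ)
    (fun c => Ψ.coreflection_mem_image hβ) (fun c _ => Ψ.coreflection_coreflection hβ c)
    (fun c _ => Ψ.coreflection_coreflection hβ c) fun _ _ => rfl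

lemma invariantForm_self_pos {β : X} (hβ : β ∈ Ψ.roots) : 0 < Ψ.invariantForm β β := by
  rw [invariantForm_apply]
  exact Finset.sum_pos' (fun c _ => mul_self_nonneg _)
    ⟨Ψ.coroot β, Finset.mem_image_of_mem _ hβ, by rw [Ψ.pair_self β hβ]; norm_num⟩

lemma two_mul_invariantForm {β : X} (hβ : β ∈ Ψ.roots) (u : X) :
    2 * Ψ.invariantForm u β = Ψ.pair u (Ψ.coroot β) * Ψ.invariantForm β β := by
  have h := Ψ.invariantForm_reflection hβ u β
  rw [reflection_self Ψ hβ, reflection_apply Ψ hβ] at h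
  simp only [map_sub, map_neg, map_zsmul, LinearMap.sub_apply, LinearMap.smul_apply,
    smul_eq_mul] at h
  linarith

lemma invariantForm_eq_zero_of_self_eq_zero {u : X} (hu : Ψ.invariantForm u u = 0) (x : X) :
    Ψ.invariantForm x u = 0 := by
  rw [invariantForm_apply, Finset.sum_eq_zero_iff_of_nonneg fun c _ => mul_self_nonneg _] at hu
  rw [invariantForm_apply]
  exact Finset.sum_eq_zero fun c hc => by rw [mul_self_eq_zero.1 (hu c hc), mul_zero]

def corootSpan : Submodule ℤ Y := Submodule.span ℤ (Ψ.coroot '' Ψ.roots)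

/-- For `v = β^∨` take `D = B(β, β)` and `u = 2β`, by `two_mul_invariantForm`. -/
lemma exists_pos_mul_pair_eq_invariantForm {v : Y} (hv : v ∈ Ψ.corootSpan) :
    ∃ D : ℤ, 0 < D ∧ ∃ u ∈ Ψ.rootSpan, ∀ x, D * Ψ.pair x v = Ψ.invariantForm x u := by
  induction hv using Submodule.span_induction with
  | mem v hv =>
    obtain ⟨β, hβ, rfl⟩ := hv
    refine ⟨_, Ψ.invariantForm_self_pos hβ, (2 : ℤ) • β,
      Submodule.smul_mem _ _ (Submodule.subset_span hβ), fun x => ?_⟩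
    rw [map_zsmul, smul_eq_mul, Ψ.two_mul_invariantForm hβ, mul_comm]
  | zero => exact ⟨1, one_pos, 0, zero_mem _, fun x => by simp⟩
  | add v₁ v₂ _ _ h₁ h₂ =>
    obtain ⟨D₁, hD₁, u₁, hu₁, h₁⟩ := h₁
    obtain ⟨D₂, hD₂, u₂, hu₂, h₂⟩ := h₂
    refine ⟨D₁ * D₂, mul_pos hD₁ hD₂, D₂ • u₁ + D₁ • u₂,
      add_mem (Submodule.smul_mem _ _ hu₁) (Submodule.smul_mem _ _ hu₂), fun x => ?_⟩
    simp only [map_add, map_zsmul, smul_eq_mul, ← h₁, ← h₂]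
    ring
  | smul k v _ h =>
    obtain ⟨D, hD, u, hu, h⟩ := h
    refine ⟨D, hD, k • u, Submodule.smul_mem _ _ hu, fun x => ?_⟩
    simp only [map_zsmul, smul_eq_mul, ← h]
    ring

lemma eq_zero_of_mem_corootSpan {v : Y} (hv : v ∈ Ψ.corootSpan)
    (hroots : ∀ β ∈ Ψ.roots, Ψ.pair β v = 0) : v = 0 := by
  obtain ⟨D, hD, u, hu, hDu⟩ := Ψ.exists_pos_mul_pair_eq_invariantForm hv
  have hker : Ψ.rootSpan ≤ LinearMap.ker (Ψ.invariantForm.flip u) :=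
    Submodule.span_le.2 fun β hβ => by simp [← hDu, hroots β hβ]
  have huu : Ψ.invariantForm u u = 0 := hker hu
  apply Ψ.perfect'.injective
  ext x
  simpa [hD.ne'] using (hDu x).trans (Ψ.invariantForm_eq_zero_of_self_eq_zero huu x)

lemma exists_adjoint_of_mem_weylGroup {w : AddAut X} (hw : w ∈ Ψ.weylGroup) :
    ∃ w' : Y ≃+ Y, (∀ x y, Ψ.pair (w x) (w' y) = Ψ.pair x y) ∧ ∀ y, w' y - y ∈ Ψ.corootSpan := by
  induction hw using Subgroup.closure_induction with
  | mem g hg =>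
    obtain ⟨β, hβ, hg⟩ := hg
    have h2 : (Ψ.pair β).toIntLinearMap (Ψ.coroot β) = 2 := Ψ.pair_self β hβ
    have hr : ∀ y, Module.reflection h2 y = Ψ.coreflection β y :=
      fun y => Module.reflection_apply y h2
    refine ⟨(Module.reflection h2).toAddEquiv, fun x y => ?_, fun y => ?_⟩
    · change Ψ.pair (g x) (Module.reflection h2 y) = _
      rw [hr, hg, ← reflection_apply Ψ hβ, pair_reflection Ψ hβ, coreflection_coreflection Ψ hβ]
    · change Module.reflection h2 y - y ∈ Ψ.corootSpan
      simpa [hr, coreflection] using neg_mem (Submodule.smul_mem Ψ.corootSpan (Ψ.pair β y)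
        (Submodule.subset_span (Set.mem_image_of_mem Ψ.coroot hβ)))
  | one => exact ⟨AddEquiv.refl Y, fun _ _ => rfl, fun _ => by simp⟩
  | mul u v _ _ hu hv =>
    obtain ⟨u', hu', hu'Y⟩ := hu
    obtain ⟨v', hv', hv'Y⟩ := hv
    refine ⟨v'.trans u', fun x y => (hu' _ _).trans (hv' x y), fun y => ?_⟩
    simpa using add_mem (hu'Y (v' y)) (hv'Y y)
  | inv u _ hu =>
    obtain ⟨u', hu', hu'Y⟩ := hu
    refine ⟨u'.symm, fun x y => ?_, fun y => ?_⟩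
    · rw [← hu', u'.apply_symm_apply]
      exact congrArg (Ψ.pair · y) (u.apply_symm_apply x)
    · simpa using neg_mem (hu'Y (u'.symm y))

lemma eq_one_of_forall_mem_roots {w : AddAut X} (hw : w ∈ Ψ.weylGroup)
    (hfix : ∀ β ∈ Ψ.roots, w β = β) : w = 1 := by
  obtain ⟨w', hw', hw'Y⟩ := Ψ.exists_adjoint_of_mem_weylGroup hw
  have hid : ∀ y, w' y = y := fun y => sub_eq_zero.1 <| Ψ.eq_zero_of_mem_corootSpan (hw'Y y)
    fun β hβ => by rw [map_sub, ← hw' β y, hfix β hβ, sub_self]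
  refine AddEquiv.ext fun x => Ψ.perfect.injective (AddMonoidHom.ext fun y => ?_)
  change Ψ.pair (w x) y = Ψ.pair x y
  simpa [hid] using hw' x y

end

section

variable {Ψ : ZRootDatum X Y} {Δ : Finset X}

lemma IsBase.linearIndepOn (hΔ : Ψ.IsBase Δ) : LinearIndepOn ℤ id (Δ : Set X) := hΔ.2.1

lemma IsBase.mem_roots (hΔ : Ψ.IsBase Δ) {a : X} (ha : a ∈ Δ) : a ∈ Ψ.roots := hΔ.1 ha

lemma IsBase.mem_or_neg_mem_nonnegCone (hΔ : Ψ.IsBase Δ) {β : X} (hβ : β ∈ Ψ.roots) :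
    β ∈ nonnegCone Δ ∨ -β ∈ nonnegCone Δ := by
  obtain ⟨c, hc, hc0 | hc0⟩ := hΔ.2.2 β hβ
  · exact Or.inl ⟨c, hc, hc0⟩
  · exact Or.inr ⟨-c, by simp [hc, neg_smul], fun a ha => neg_nonneg.2 (hc0 a ha)⟩

lemma reflection_eq_sum_smul {a : X} (ha : a ∈ Δ) (haΨ : a ∈ Ψ.roots) {β : X} {c : X → ℤ}
    (hc : β = ∑ x ∈ Δ, c x • x) :
    Ψ.reflection a β = ∑ x ∈ Δ, (c x - if x = a then Ψ.pair β (Ψ.coroot a) else 0) • x := by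
  simp [reflection_apply Ψ haΨ, sub_smul, Finset.sum_sub_distrib, ite_smul, ha, ← hc]

lemma IsBase.exists_eq_zsmul_of_neg_reflection_mem (hΔ : Ψ.IsBase Δ) {a : X} (ha : a ∈ Δ)
    {β : X} (hβ : β ∈ nonnegCone Δ) (hneg : -Ψ.reflection a β ∈ nonnegCone Δ) :
    ∃ q : ℤ, β = q • a := by
  obtain ⟨c, hc, hc0⟩ := hβ
  have hc' : ∀ x ∈ Δ, x ≠ a → c x = 0 := fun x hx hxa => by
    have := coeff_nonneg_of_mem_nonnegCone hΔ.linearIndepOn hneg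
      (c := fun x => -(c x - if x = a then Ψ.pair β (Ψ.coroot a) else 0))
      (by simp only [reflection_eq_sum_smul ha (hΔ.mem_roots ha) hc, ← Finset.sum_neg_distrib,
        neg_smul]) hx
    simp only [hxa, if_false, sub_zero, neg_nonneg] at this
    exact le_antisymm this (hc0 x hx)
  exact ⟨c a, hc.trans (Finset.sum_eq_single_of_mem a ha fun x hx hxa => by
    rw [hc' x hx hxa, zero_smul])⟩

lemma IsBase.reflection_mem_nonnegCone (hΔ : Ψ.IsBase Δ) {a : X} (ha : a ∈ Δ) {β : X}
    (hβ : β ∈ Ψ.roots) (hβΔ : β ∈ nonnegCone Δ) (hne : ∀ q : ℤ, β ≠ q • a) :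
    Ψ.reflection a β ∈ nonnegCone Δ :=
  (hΔ.mem_or_neg_mem_nonnegCone (Ψ.reflection_mem_roots hβ)).resolve_right fun hneg =>
    let ⟨q, hq⟩ := hΔ.exists_eq_zsmul_of_neg_reflection_mem ha hβΔ hneg
    hne q hq

lemma IsBase.exists_pair_coroot_pos (hΔ : Ψ.IsBase Δ) {β : X} (hβ : β ∈ Ψ.roots)
    (hβΔ : β ∈ nonnegCone Δ) : ∃ a ∈ Δ, 0 < Ψ.pair β (Ψ.coroot a) := by
  obtain ⟨c, hc, hc0⟩ := hβΔ
  have hexp : Ψ.invariantForm β β = ∑ a ∈ Δ, c a * Ψ.invariantForm β a := by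
    nth_rewrite 2 [hc]
    simp [map_sum]
  obtain ⟨a, ha, hca⟩ := Finset.exists_lt_of_sum_lt (s := Δ) (f := fun _ => (0 : ℤ))
    (g := fun a => c a * Ψ.invariantForm β a)
    (by rw [Finset.sum_const_zero, ← hexp]; exact Ψ.invariantForm_self_pos hβ)
  have hB : 0 < Ψ.invariantForm β a := pos_of_mul_pos_right hca (hc0 a ha)
  have := Ψ.two_mul_invariantForm (hΔ.mem_roots ha) β
  exact ⟨a, ha, pos_of_mul_pos_left (by linarith) (Ψ.invariantForm_self_pos (hΔ.mem_roots ha)).le⟩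

/-- Induction on the height `∑ c`: reflecting in a simple root `a` with `⟨β, a^∨⟩ > 0` lowers it. -/
lemma IsBase.exists_simple_word_eqOn_reflection_of_sum_le (hΔ : Ψ.IsBase Δ) (n : ℕ) :
    ∀ {β : X} {c : X → ℤ}, β ∈ Ψ.roots → β = ∑ a ∈ Δ, c a • a → (∀ a ∈ Δ, 0 ≤ c a) →
      ∑ a ∈ Δ, c a ≤ n →
      ∃ L : List X, (∀ b ∈ L, b ∈ Δ) ∧ EqOn (Ψ.reflection β) (Ψ.wordProd L) Ψ.rootSpan := by
  induction n with
  | zero =>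
    intro β c hβ hc hc0 hsum
    have hzero := (Finset.sum_eq_zero_iff_of_nonneg hc0).1 (le_antisymm (by simpa using hsum)
      (Finset.sum_nonneg hc0))
    refine absurd (hc.trans (Finset.sum_eq_zero fun a ha => ?_)) (Ψ.ne_zero_of_mem_roots hβ)
    rw [hzero a ha, zero_smul]
  | succ n ih =>
    intro β c hβ hc hc0 hsum
    obtain ⟨a, ha, hpa⟩ := hΔ.exists_pair_coroot_pos hβ ⟨c, hc, hc0⟩
    by_cases hmul : ∃ q : ℤ, β = q • a
    · obtain ⟨q, hq⟩ := hmul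
      exact ⟨[a], by simpa using ha, by
        rw [wordProd_singleton]; exact Ψ.reflection_eqOn_of_eq_zsmul (hΔ.mem_roots ha) hβ hq⟩
    push Not at hmul
    set c' : X → ℤ := fun x => c x - if x = a then Ψ.pair β (Ψ.coroot a) else 0
    have hc' : Ψ.reflection a β = ∑ x ∈ Δ, c' x • x :=
      reflection_eq_sum_smul ha (hΔ.mem_roots ha) hc
    have hsum' : ∑ x ∈ Δ, c' x ≤ n := by
      simp only [c', Finset.sum_sub_distrib, Finset.sum_ite_eq', ha, if_true]
      push_cast at hsum
      linarith
    obtain ⟨L, hL, hLeq⟩ := ih (Ψ.reflection_mem_roots hβ) hc'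
      (fun x hx => coeff_nonneg_of_mem_nonnegCone hΔ.linearIndepOn
        (hΔ.reflection_mem_nonnegCone ha hβ ⟨c, hc, hc0⟩ hmul) hc' hx) hsum'
    refine ⟨a :: L ++ [a], by simpa [or_imp, forall_and] using ⟨ha, hL, ha⟩, fun x hx => ?_⟩
    have hconj := Ψ.reflection_apply_eqOn_conj (Ψ.reflection_mem_roots_iff a)
      (Ψ.reflection_mem_roots (β := a) hβ) hx
    rw [reflection_reflection] at hconj
    rw [hconj]
    simp only [Function.comp_apply, reflection_symm_apply, wordProd_append, wordProd_cons,
      LinearEquiv.mul_apply]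
    rw [hLeq (Ψ.reflection_mapsTo_rootSpan a hx)]
    rfl

lemma IsBase.exists_simple_word_eqOn_reflection (hΔ : Ψ.IsBase Δ) {β : X} (hβ : β ∈ Ψ.roots) :
    ∃ L : List X, (∀ b ∈ L, b ∈ Δ) ∧ EqOn (Ψ.reflection β) (Ψ.wordProd L) Ψ.rootSpan := by
  have hpos : ∀ {β}, β ∈ Ψ.roots → β ∈ nonnegCone Δ →
      ∃ L : List X, (∀ b ∈ L, b ∈ Δ) ∧ EqOn (Ψ.reflection β) (Ψ.wordProd L) Ψ.rootSpan := by
    rintro β hβ ⟨c, hc, hc0⟩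
    exact hΔ.exists_simple_word_eqOn_reflection_of_sum_le (∑ a ∈ Δ, c a).toNat hβ hc hc0
      (Int.self_le_toNat _)
  rcases hΔ.mem_or_neg_mem_nonnegCone hβ with hβΔ | hβΔ
  · exact hpos hβ hβΔ
  · obtain ⟨L, hL, hLeq⟩ := hpos (Ψ.neg_mem_roots hβ) hβΔ
    refine ⟨L, hL, EqOn.trans ?_ hLeq⟩
    exact (Ψ.reflection_eqOn_of_eq_zsmul hβ (Ψ.neg_mem_roots hβ) (q := -1) (by simp)).symm

lemma IsBase.exists_simple_word_eqOn_wordProd (hΔ : Ψ.IsBase Δ) {L : List X}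
    (hL : ∀ b ∈ L, b ∈ Ψ.roots) :
    ∃ L' : List X, (∀ b ∈ L', b ∈ Δ) ∧ EqOn (Ψ.wordProd L) (Ψ.wordProd L') Ψ.rootSpan := by
  induction L with
  | nil => exact ⟨[], by simp, fun _ _ => rfl⟩
  | cons β L ih =>
    obtain ⟨L₁, hL₁, hL₁eq⟩ := ih fun b hb => hL b (List.mem_cons_of_mem β hb)
    obtain ⟨Lβ, hLβ, hLβeq⟩ := hΔ.exists_simple_word_eqOn_reflection (hL β List.mem_cons_self)
    refine ⟨Lβ ++ L₁, by simpa [or_imp, forall_and] using ⟨hLβ, hL₁⟩, fun x hx => ?_⟩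
    rw [wordProd_cons, wordProd_append, LinearEquiv.mul_apply, LinearEquiv.mul_apply, hL₁eq hx,
      hLβeq (Ψ.wordProd_mapsTo_rootSpan L₁ hx)]

/-- The exchange condition. -/
lemma IsBase.exists_eqOn_wordProd_append_singleton (hΔ : Ψ.IsBase Δ) {a : X} (ha : a ∈ Δ) :
    ∀ {K : List X}, (∀ b ∈ K, b ∈ Δ) → -Ψ.wordProd K a ∈ nonnegCone Δ →
      ∃ K' : List X, (∀ b ∈ K', b ∈ Δ) ∧ K'.length + 1 = K.length ∧
        EqOn (Ψ.wordProd K') (Ψ.wordProd (K ++ [a])) Ψ.rootSpan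
  | [], _, hneg =>
    absurd (eq_zero_of_mem_nonnegCone_of_neg_mem hΔ.linearIndepOn (mem_nonnegCone_of_mem ha) hneg)
      (Ψ.ne_zero_of_mem_roots (hΔ.mem_roots ha))
  | b :: K, hK, hneg => by
    have hb : b ∈ Δ := hK b List.mem_cons_self
    have hK' : ∀ b ∈ K, b ∈ Δ := fun b' hb' => hK b' (List.mem_cons_of_mem b hb')
    by_cases hKa : -Ψ.wordProd K a ∈ nonnegCone Δ
    · obtain ⟨K', hK'Δ, hlen, hK'eq⟩ := hΔ.exists_eqOn_wordProd_append_singleton ha hK' hKa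
      refine ⟨b :: K', by simpa using ⟨hb, hK'Δ⟩, by simp [hlen], fun x hx => ?_⟩
      simp only [wordProd_cons, List.cons_append, LinearEquiv.mul_apply]
      rw [hK'eq hx, wordProd_append, LinearEquiv.mul_apply]
    · set γ := Ψ.wordProd K a
      have hγ : γ ∈ Ψ.roots := (Ψ.wordProd_mem_roots_iff K a).2 (hΔ.mem_roots ha)
      obtain ⟨q, hq⟩ := hΔ.exists_eq_zsmul_of_neg_reflection_mem hb
        ((hΔ.mem_or_neg_mem_nonnegCone hγ).resolve_right hKa) (by simpa [γ] using hneg)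
      -- `s_b = s_γ = U s_a U⁻¹` on the root lattice, where `U` is the word `K` and `γ = U a`
      refine ⟨K, hK', rfl, fun x hx => ?_⟩
      have hy := Ψ.wordProd_mapsTo_rootSpan K (Ψ.reflection_mapsTo_rootSpan a hx)
      rw [List.cons_append, wordProd_cons, wordProd_append, wordProd_singleton]
      simp only [LinearEquiv.mul_apply]
      rw [← Ψ.reflection_eqOn_of_eq_zsmul (hΔ.mem_roots hb) hγ hq hy,
        Ψ.reflection_apply_eqOn_conj (Ψ.wordProd_mem_roots_iff K) (hΔ.mem_roots ha) hy]
      simp [reflection_reflection]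

lemma IsBase.eqOn_wordProd_id (hΔ : Ψ.IsBase Δ) {L : List X} (hL : ∀ b ∈ L, b ∈ Δ)
    (hpos : ∀ β ∈ Ψ.roots, β ∈ nonnegCone Δ → Ψ.wordProd L β ∈ nonnegCone Δ) :
    EqOn (Ψ.wordProd L) id Ψ.rootSpan := by
  induction hn : L.length using Nat.strong_induction_on generalizing L with
  | _ n ih =>
  rcases L.eq_nil_or_concat' with rfl | ⟨K, a, rfl⟩
  · exact fun _ _ => rfl
  have ha : a ∈ Δ := hL a (by simp)
  have hneg : -Ψ.wordProd K a ∈ nonnegCone Δ := by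
    simpa [reflection_self Ψ (hΔ.mem_roots ha)] using
      hpos a (hΔ.mem_roots ha) (mem_nonnegCone_of_mem ha)
  obtain ⟨K', hK', hlen, hK'eq⟩ :=
    hΔ.exists_eqOn_wordProd_append_singleton ha (fun b hb => hL b (by simp [hb])) hneg
  have hK'pos : ∀ β ∈ Ψ.roots, β ∈ nonnegCone Δ → Ψ.wordProd K' β ∈ nonnegCone Δ :=
    fun β hβ hβΔ => hK'eq (Submodule.subset_span hβ) ▸ hpos β hβ hβΔ
  exact hK'eq.symm.trans (ih K'.length (by simp at hn; omega) hK' hK'pos rfl)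

theorem IsBase.exists_root_nonneg_apply_nonpos (hΔ : Ψ.IsBase Δ) {w : AddAut X}
    (hw : w ∈ Ψ.weylGroup) (hne : w ≠ 1) :
    ∃ β ∈ Ψ.roots, β ∈ nonnegCone Δ ∧ -w β ∈ nonnegCone Δ := by
  by_contra! hpos
  obtain ⟨L, hL, hwL⟩ := Ψ.exists_wordProd_of_mem_weylGroup hw
  obtain ⟨L', hL', hLL'⟩ := hΔ.exists_simple_word_eqOn_wordProd hL
  have hw_roots : ∀ β ∈ Ψ.roots, w β = Ψ.wordProd L' β := fun β hβ =>
    (hwL β).trans (hLL' (Submodule.subset_span hβ))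
  have hL'pos : ∀ β ∈ Ψ.roots, β ∈ nonnegCone Δ → Ψ.wordProd L' β ∈ nonnegCone Δ := by
    intro β hβ hβΔ
    have hwβ : w β ∈ Ψ.roots := by rw [hw_roots β hβ, wordProd_mem_roots_iff]; exact hβ
    rw [← hw_roots β hβ]
    exact (hΔ.mem_or_neg_mem_nonnegCone hwβ).resolve_right (hpos β hβ hβΔ)
  exact hne (Ψ.eq_one_of_forall_mem_roots hw fun β hβ =>
    (hw_roots β hβ).trans (hΔ.eqOn_wordProd_id hL' hL'pos (Submodule.subset_span hβ)))

end

end ZRootDatum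

lemma normMap_apply [Fintype Γ] (ρ : Γ →* AddAut X) (x : X) : normMap ρ x = ∑ γ, ρ γ x := by
  simp [normMap, AddMonoidHom.finsetSum_apply]

section Norm

variable [Fintype Γ] {ρ : Γ →* AddAut X} {Δ : Finset X} {x : X}

lemma normMap_mem_nonnegCone (hstab : ∀ γ : Γ, ∀ a ∈ Δ, ρ γ a ∈ Δ) (hx : x ∈ nonnegCone Δ) :
    normMap ρ x ∈ nonnegCone Δ := by
  rw [normMap_apply]
  exact sum_mem fun γ _ => map_mem_nonnegCone (ρ γ).toAddMonoidHom (hstab γ) hx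

/-- `-x = ∑_{γ ≠ 1} γ x` lies in the cone, which is pointed. -/
lemma eq_zero_of_normMap_eq_zero (hΔ : LinearIndepOn ℤ id (Δ : Set X))
    (hstab : ∀ γ : Γ, ∀ a ∈ Δ, ρ γ a ∈ Δ) (hx : x ∈ nonnegCone Δ) (h : normMap ρ x = 0) :
    x = 0 := by
  rw [normMap_apply, ← Finset.add_sum_erase _ _ (Finset.mem_univ 1), map_one,
    add_eq_zero_iff_eq_neg'] at h
  refine eq_zero_of_mem_nonnegCone_of_neg_mem hΔ hx (h ▸ sum_mem fun γ _ => ?_)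
  exact map_mem_nonnegCone (ρ γ).toAddMonoidHom (hstab γ) hx

lemma istar_ne_of_neg_mem_nonnegCone (hΔ : LinearIndepOn ℤ id (Δ : Set X))
    (hstab : ∀ γ : Γ, ∀ a ∈ Δ, ρ γ a ∈ Δ) (hx : x ∈ nonnegCone Δ) (hx0 : x ≠ 0) {y : X}
    (hy : -y ∈ nonnegCone Δ) : istar ρ y ≠ istar ρ x := by
  intro h
  have hker : normMap ρ (-y + x) = 0 := (QuotientAddGroup.eq.1 h : -y + x ∈ (normMap ρ).ker)
  rw [map_add, add_eq_zero_iff_neg_eq] at hker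
  refine hx0 (eq_zero_of_normMap_eq_zero hΔ hstab hx ?_)
  refine eq_zero_of_mem_nonnegCone_of_neg_mem hΔ (normMap_mem_nonnegCone hstab hx) ?_
  rw [← hker, neg_neg]
  exact normMap_mem_nonnegCone hstab hy

end Norm

theorem weylFixed_nontrivial_moves_restricted_general
    [Fintype Γ]
    (Ψ : ZRootDatum X Y) (ρ : Γ →* AddAut X)
    (Δ : Finset X) (hΔ : Ψ.IsBase Δ)
    (hstab : ∀ γ : Γ, ∀ a ∈ Δ, ρ γ a ∈ Δ)
    (w : AddAut X) (hw : w ∈ Ψ.weylGroup)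
    (hfix : ∀ γ : Γ, ρ γ * w * (ρ γ)⁻¹ = w) (hne : w ≠ 1) :
    ∃ β ∈ Ψ.roots,
      (∃ c : X → ℤ, β = ∑ a ∈ Δ, c a • a ∧ ∀ a ∈ Δ, 0 ≤ c a) ∧
      (∀ γ : Γ, ∃ c : X → ℤ, w (ρ γ β) = ∑ a ∈ Δ, c a • a ∧ ∀ a ∈ Δ, c a ≤ 0) ∧
      (∃ c : X → ℤ, (∑ γ : Γ, ρ γ (w β)) = ∑ a ∈ Δ, c a • a ∧ ∀ a ∈ Δ, c a ≤ 0) ∧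
      istar ρ (w β) ≠ istar ρ β := by
  obtain ⟨β, hβ, hβΔ, hwβ⟩ := hΔ.exists_root_nonneg_apply_nonpos hw hne
  have hcomm : ∀ γ x, w (ρ γ x) = ρ γ (w x) := fun γ x =>
    (DFunLike.congr_fun (mul_inv_eq_iff_eq_mul.1 (hfix γ)) x).symm
  have hneg : ∀ γ, -w (ρ γ β) ∈ nonnegCone Δ := fun γ => by
    rw [hcomm, ← map_neg]
    exact map_mem_nonnegCone (ρ γ).toAddMonoidHom (hstab γ) hwβ
  refine ⟨β, hβ, hβΔ, fun γ => exists_nonpos_coeffs_of_neg_mem_nonnegCone (hneg γ),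
    exists_nonpos_coeffs_of_neg_mem_nonnegCone ?_, istar_ne_of_neg_mem_nonnegCone
      hΔ.linearIndepOn hstab hβΔ (Ψ.ne_zero_of_mem_roots hβ) hwβ⟩
  rw [← Finset.sum_neg_distrib]
  exact sum_mem fun γ _ => hcomm γ β ▸ hneg γ

/-- Let `w ∈ W^Γ` be nontrivial.  Then there is a positive
root `β` (with respect to `Δ`) such that `w(γ·β)` is negative for every
`γ ∈ Γ`; consequently the orbit sum `∑_γ γ·(wβ)` (an integral multiple of
`ι(w(i*β))`) is a nonpositive combination of simple roots, and
`w(i*β) = i*(wβ) ≠ i*β` in the restricted lattice. -/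
theorem weylFixed_nontrivial_moves_restricted
    [Fintype Γ] [Module.Free ℤ X] [Module.Finite ℤ X]
    (Ψ : ZRootDatum X Y) (ρ : Γ →* AddAut X) (ρ' : Γ →* AddAut Y)
    (hact : RDAction Ψ ρ ρ') (Δ : Finset X) (hΔ : Ψ.IsBase Δ)
    (hstab : ∀ γ : Γ, ∀ a ∈ Δ, ρ γ a ∈ Δ)
    (w : AddAut X) (hw : w ∈ Ψ.weylGroup)
    (hfix : ∀ γ : Γ, ρ γ * w * (ρ γ)⁻¹ = w) (hne : w ≠ 1) :
    ∃ β ∈ Ψ.roots,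
      (∃ c : X → ℤ, β = ∑ a ∈ Δ, c a • a ∧ ∀ a ∈ Δ, 0 ≤ c a) ∧
      (∀ γ : Γ, ∃ c : X → ℤ, w (ρ γ β) = ∑ a ∈ Δ, c a • a ∧ ∀ a ∈ Δ, c a ≤ 0) ∧
      (∃ c : X → ℤ, (∑ γ : Γ, ρ γ (w β)) = ∑ a ∈ Δ, c a • a ∧ ∀ a ∈ Δ, c a ≤ 0) ∧
      istar ρ (w β) ≠ istar ρ β :=
  weylFixed_nontrivial_moves_restricted_general Ψ ρ Δ hΔ hstab w hw hfix hne
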